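/- For any pair-matched word w of length 2t and any sign vector l ∈ {−1,1}^t with l ≠ (−1,...,−1), lim_{k→∞} #Π*_{L_T,k,l}(w)/k^{t+1} = 0. -/

import Mathlib

/-! Write `d i = π (i - 1) - π i` for the increments of a circuit; they sum to `0`. Pairing each
generating vertex `i` with the second occurrence `p i` of its letter, the constraint
`d i = l i * d (p i)` turns `∑ d = 0` into `∑_{i generating} (l i + 1) * d (p i) = 0`. If
`l i₀ = 1`, the coefficient of `d (p i₀)` is `2`, so `d (p i₀)` is determined by the other
`d (p i)`, and these together with `π 0` determine `π`. Hence there are at most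
`k * (2k + 1) ^ (t - 1) = O(k ^ t)` such circuits. -/

open Filter Topology

/-- A word `w` of length `h` (a function from positions to letters) is
pair-matched if every letter occurs exactly twice. -/
def PairMatched {h : ℕ} (w : Fin h → ℕ) : Prop :=
  ∀ i, (Finset.univ.filter fun j => w j = w i).card = 2

/-- A word is reducible to the empty word by successively removing adjacent
double letters. -/
inductive CatalanReducible : List ℕ → Prop
  | nil : CatalanReducible []
  | step (l₁ l₂ : List ℕ) (a : ℕ) :
      CatalanReducible (l₁ ++ l₂) → CatalanReducible (l₁ ++ a :: a :: l₂)

/-- A word (as a function) is Catalan if its list of letters is reducible to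
the empty word by successive removal of adjacent double letters. -/
def CatalanWord {h : ℕ} (w : Fin h → ℕ) : Prop := CatalanReducible (List.ofFn w)

/-- `Π*_{L_T,n}(w)`: circuits `π : {0,…,2t} → {1,…,n}` (coded by `Fin n`) with
`π(0) = π(2t)` such that matching letters of `w` force equal absolute
increments `|π(i−1) − π(i)|`. -/
def toepStar (t n : ℕ) (w : Fin (2 * t) → ℕ) : Set (Fin (2 * t + 1) → Fin n) :=
  {π | π 0 = π (Fin.last (2 * t)) ∧ ∀ i j : Fin (2 * t), w i = w j →
    ((π i.castSucc : ℤ) - (π i.succ : ℤ)).natAbs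
      = ((π j.castSucc : ℤ) - (π j.succ : ℤ)).natAbs}

/-- `Π*_{L_W,n}(w)`: circuits with `π(0) = π(2t)` such that matching letters of
`w` force equal Wigner link values `(min, max)` of consecutive entries. -/
def wignerStar (t n : ℕ) (w : Fin (2 * t) → ℕ) : Set (Fin (2 * t + 1) → Fin n) :=
  {π | π 0 = π (Fin.last (2 * t)) ∧ ∀ i j : Fin (2 * t), w i = w j →
    (min (π i.castSucc) (π i.succ), max (π i.castSucc) (π i.succ))
      = (min (π j.castSucc) (π j.succ), max (π j.castSucc) (π j.succ))}

/-- Position `i` is a generating vertex of `w`: the first occurrence of its letter. -/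
def IsGen {h : ℕ} (w : Fin h → ℕ) (i : Fin h) : Prop := ∀ j, w j = w i → i ≤ j

/-- `Π*_{L_T,n,l}(w)`: circuits in `Π*_{L_T,n}(w)` such that for every
generating vertex `i` with matching position `j`,
`π(i−1) − π(i) = l_i · (π(j−1) − π(j))`. -/
def toepStarSigned (t n : ℕ) (w : Fin (2 * t) → ℕ) (l : Fin (2 * t) → ℤ) :
    Set (Fin (2 * t + 1) → Fin n) :=
  {π | π ∈ toepStar t n w ∧ ∀ i j : Fin (2 * t), IsGen w i → i ≠ j → w j = w i →
    (π i.castSucc : ℤ) - (π i.succ : ℤ) = l i * ((π j.castSucc : ℤ) - (π j.succ : ℤ))}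

open Finset

theorem Fin.sum_castSucc_sub_succ {G : Type*} [AddCommGroup G] {m : ℕ} (f : Fin (m + 1) → G) :
    ∑ i : Fin m, (f i.castSucc - f i.succ) = f 0 - f (Fin.last m) := by
  induction m with
  | zero => simp
  | succ m ih =>
    rw [Fin.sum_univ_castSucc]
    simp only [Fin.succ_castSucc, ih fun i => f i.castSucc, Fin.succ_last, Fin.castSucc_zero,
      sub_add_sub_cancel]

section Increment

variable {m n : ℕ}

def increment (π : Fin (m + 1) → Fin n) (i : Fin m) : ℤ :=
  (π i.castSucc : ℤ) - (π i.succ : ℤ)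

theorem sum_increment (π : Fin (m + 1) → Fin n) :
    ∑ i, increment π i = π 0 - π (Fin.last m) :=
  Fin.sum_castSucc_sub_succ fun x => (π x : ℤ)

theorem increment_mem_Icc (π : Fin (m + 1) → Fin n) (i : Fin m) :
    increment π i ∈ Icc (-(n : ℤ)) n := by
  have := (π i.castSucc).isLt
  have := (π i.succ).isLt
  rw [increment, mem_Icc]
  omega

theorem eq_of_increment_eq {π π' : Fin (m + 1) → Fin n} (h₀ : π 0 = π' 0)
    (h : ∀ i, increment π i = increment π' i) : π = π' := by
  funext x
  induction x using Fin.induction with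
  | zero => exact h₀
  | succ i ih =>
    have := h i
    rw [Fin.ext_iff] at ih ⊢
    rw [increment, increment] at this
    omega

end Increment

section PairMatched

variable {h : ℕ} {w : Fin h → ℕ}

-- Takes the junk value `i` when the letter at `i` occurs nowhere else.
noncomputable def partner (w : Fin h → ℕ) (i : Fin h) : Fin h :=
  if hx : ∃ j, j ≠ i ∧ w j = w i then hx.choose else i

instance (w : Fin h → ℕ) : DecidablePred (IsGen w) := fun i =>
  inferInstanceAs (Decidable (∀ j, w j = w i → i ≤ j))

def genVertices (w : Fin h → ℕ) : Finset (Fin h) := univ.filter (IsGen w)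

@[simp]
theorem mem_genVertices {i : Fin h} : i ∈ genVertices w ↔ IsGen w i := by
  simp [genVertices]

theorem PairMatched.exists_ne (hw : PairMatched w) (i : Fin h) : ∃ j, j ≠ i ∧ w j = w i := by
  obtain ⟨j, hj, hji⟩ := exists_mem_ne (hw i ▸ one_lt_two) i
  exact ⟨j, hji, (mem_filter.mp hj).2⟩

theorem PairMatched.partner_ne (hw : PairMatched w) (i : Fin h) : partner w i ≠ i := by
  rw [partner, dif_pos (hw.exists_ne i)]
  exact (hw.exists_ne i).choose_spec.1

theorem PairMatched.apply_partner (hw : PairMatched w) (i : Fin h) : w (partner w i) = w i := by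
  rw [partner, dif_pos (hw.exists_ne i)]
  exact (hw.exists_ne i).choose_spec.2

theorem PairMatched.eq_partner (hw : PairMatched w) {i j : Fin h} (hne : j ≠ i)
    (hj : w j = w i) : j = partner w i := by
  have hcard : ((univ.filter fun j => w j = w i).erase i).card ≤ 1 := by
    rw [card_erase_of_mem (by simp), hw i]
  exact card_le_one.mp hcard j (by simp [hne, hj]) (partner w i)
    (by simp [hw.partner_ne i, hw.apply_partner i])

theorem PairMatched.partner_involutive (hw : PairMatched w) : Function.Involutive (partner w) :=
  fun i => (hw.eq_partner (hw.partner_ne i).symm (hw.apply_partner i).symm).symm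

theorem PairMatched.isGen_iff_lt_partner (hw : PairMatched w) {i : Fin h} :
    IsGen w i ↔ i < partner w i := by
  refine ⟨fun hi => (hi _ (hw.apply_partner i)).lt_of_ne (hw.partner_ne i).symm,
    fun hlt j hj => ?_⟩
  rcases eq_or_ne j i with rfl | hne
  · exact le_rfl
  · exact hw.eq_partner hne hj ▸ hlt.le

theorem PairMatched.isGen_partner_iff (hw : PairMatched w) {i : Fin h} :
    IsGen w (partner w i) ↔ ¬ IsGen w i := by
  rw [hw.isGen_iff_lt_partner, hw.isGen_iff_lt_partner, hw.partner_involutive, not_lt]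
  exact ⟨le_of_lt, fun hle => hle.lt_of_ne (hw.partner_ne i)⟩

theorem PairMatched.sum_eq_sum_genVertices {M : Type*} [AddCommMonoid M] (hw : PairMatched w)
    (f : Fin h → M) : ∑ i, f i = ∑ i ∈ genVertices w, (f i + f (partner w i)) := by
  rw [sum_add_distrib, genVertices, ← sum_filter_add_sum_filter_not univ (IsGen w)]
  congr 1
  refine sum_nbij' (partner w) (partner w) ?_ ?_ (fun i _ => hw.partner_involutive i)
    (fun i _ => hw.partner_involutive i) (fun i _ => by rw [hw.partner_involutive])
  · simp [hw.isGen_partner_iff]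
  · simp [hw.isGen_partner_iff]

theorem PairMatched.two_mul_card_genVertices (hw : PairMatched w) :
    2 * #(genVertices w) = h := by
  have hsum := hw.sum_eq_sum_genVertices fun _ => 1
  rw [sum_const, sum_const, card_univ, Fintype.card_fin, smul_eq_mul, smul_eq_mul] at hsum
  omega

end PairMatched

section Signed

variable {t n : ℕ} {w : Fin (2 * t) → ℕ} {l : Fin (2 * t) → ℤ} {π π' : Fin (2 * t + 1) → Fin n}

theorem increment_eq_mul_increment_partner (hw : PairMatched w)
    (hπ : π ∈ toepStarSigned t n w l) {i : Fin (2 * t)} (hi : IsGen w i) :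
    increment π i = l i * increment π (partner w i) :=
  hπ.2 i _ hi (hw.partner_ne i).symm (hw.apply_partner i)

theorem sum_genVertices_mul_increment_partner (hw : PairMatched w)
    (hπ : π ∈ toepStarSigned t n w l) :
    ∑ i ∈ genVertices w, (l i + 1) * increment π (partner w i) = 0 := by
  have hsum : ∑ i, increment π i = 0 := by rw [sum_increment, hπ.1.1, sub_self]
  rw [hw.sum_eq_sum_genVertices] at hsum
  rw [← hsum]
  refine sum_congr rfl fun i hi => ?_
  rw [increment_eq_mul_increment_partner hw hπ (mem_genVertices.mp hi)]
  ring

theorem eq_of_increment_partner_eq (hw : PairMatched w) {i₀ : Fin (2 * t)}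
    (hl : l i₀ ≠ -1) (hπ : π ∈ toepStarSigned t n w l) (hπ' : π' ∈ toepStarSigned t n w l)
    (h₀ : π 0 = π' 0) (h : ∀ i ∈ (genVertices w).erase i₀,
      increment π (partner w i) = increment π' (partner w i)) : π = π' := by
  have hgen : ∀ i ∈ genVertices w, increment π (partner w i) = increment π' (partner w i) := by
    intro i hi
    rcases eq_or_ne i i₀ with rfl | hne
    · have hs := sum_genVertices_mul_increment_partner hw hπ
      have hs' := sum_genVertices_mul_increment_partner hw hπ'
      rw [← add_sum_erase _ _ hi, sum_congr rfl fun j hj => by rw [h j hj]] at hs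
      rw [← add_sum_erase _ _ hi] at hs'
      have hmul : (l i + 1) * (increment π (partner w i) - increment π' (partner w i)) = 0 := by
        linear_combination hs - hs'
      exact sub_eq_zero.mp ((mul_eq_zero.mp hmul).resolve_left (by omega))
    · exact h i (mem_erase.mpr ⟨hne, hi⟩)
  refine eq_of_increment_eq h₀ fun j => ?_
  by_cases hj : IsGen w j
  · rw [increment_eq_mul_increment_partner hw hπ hj, increment_eq_mul_increment_partner hw hπ' hj,
      hgen j (mem_genVertices.mpr hj)]
  · rw [← hw.partner_involutive j]
    exact hgen _ (mem_genVertices.mpr (hw.isGen_partner_iff.mpr hj))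

theorem ncard_toepStarSigned_le (hw : PairMatched w) {i₀ : Fin (2 * t)} (hi₀ : IsGen w i₀)
    (hl : l i₀ ≠ -1) : (toepStarSigned t n w l).ncard ≤ n * (2 * n + 1) ^ (t - 1) := by
  set A := (genVertices w).erase i₀
  let code : (Fin (2 * t + 1) → Fin n) → Fin n × (A → ℤ) :=
    fun π => (π 0, fun a => increment π (partner w a))
  have hA : #A = t - 1 := by
    rw [card_erase_of_mem (mem_genVertices.mpr hi₀)]
    have := hw.two_mul_card_genVertices
    omega
  let box : Finset (Fin n × (A → ℤ)) := univ ×ˢ Fintype.piFinset fun _ => Icc (-(n : ℤ)) n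
  calc (toepStarSigned t n w l).ncard
      ≤ (box : Set (Fin n × (A → ℤ))).ncard :=
        Set.ncard_le_ncard_of_injOn code (fun π _ => by
          simp only [box, code, coe_product, coe_univ, Set.mem_prod, Set.mem_univ, true_and,
            mem_coe, Fintype.mem_piFinset]
          exact fun a => increment_mem_Icc π _)
          fun π hπ π' hπ' he => eq_of_increment_partner_eq hw hl hπ hπ' (congrArg Prod.fst he)
            fun i hi => congrFun (congrArg Prod.snd he) ⟨i, hi⟩
    _ = n * (2 * n + 1) ^ (t - 1) := by
      rw [Set.ncard_coe_finset, card_product, card_univ, Fintype.card_fin, Fintype.card_piFinset,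
        prod_const, card_univ, Fintype.card_coe, hA, Int.card_Icc]
      congr 2
      omega

end Signed

theorem mul_two_mul_add_one_pow_le (n s : ℕ) : n * (2 * n + 1) ^ s ≤ 3 ^ s * n ^ (s + 1) := by
  rcases Nat.eq_zero_or_pos n with rfl | hn
  · simp
  · calc n * (2 * n + 1) ^ s ≤ n * (3 * n) ^ s := by gcongr; omega
      _ = 3 ^ s * n ^ (s + 1) := by ring

theorem tendsto_div_pow_succ_of_le_mul_pow {f : ℕ → ℝ} {C : ℝ} {t : ℕ} (hf₀ : ∀ k, 0 ≤ f k)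
    (hf : ∀ k, f k ≤ C * (k : ℝ) ^ t) :
    Tendsto (fun k : ℕ => f k / (k : ℝ) ^ (t + 1)) atTop (𝓝 0) := by
  refine tendsto_of_tendsto_of_tendsto_of_le_of_le' tendsto_const_nhds
    (tendsto_const_div_atTop_nhds_zero_nat C) (.of_forall fun k => by have := hf₀ k; positivity) ?_
  filter_upwards [eventually_ne_atTop 0] with k hk
  calc f k / (k : ℝ) ^ (t + 1) ≤ C * (k : ℝ) ^ t / (k : ℝ) ^ (t + 1) := by gcongr; exact hf k
    _ = C / k := by field_simp; ring

theorem toepStarSigned_limit_zero_general (t : ℕ) (w : Fin (2 * t) → ℕ)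
    (hw : PairMatched w) (l : Fin (2 * t) → ℤ)
    (hl' : ∃ i, IsGen w i ∧ l i = 1) :
    Tendsto (fun k : ℕ => ((toepStarSigned t k w l).ncard : ℝ) / (k : ℝ) ^ (t + 1))
      atTop (nhds 0) := by
  obtain ⟨i₀, hi₀, hli₀⟩ := hl'
  obtain ⟨s, rfl⟩ : ∃ s, t = s + 1 := ⟨t - 1, by have := i₀.isLt; omega⟩
  refine tendsto_div_pow_succ_of_le_mul_pow (C := 3 ^ s) (fun k => Nat.cast_nonneg _) fun k => ?_
  have hl : l i₀ ≠ -1 := by omega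
  have hbound := (ncard_toepStarSigned_le (n := k) hw hi₀ hl).trans
    (mul_two_mul_add_one_pow_le k s)
  exact_mod_cast hbound

/-- For a pair-matched word `w` of length `2t` and a sign vector `l` with some
coordinate at a generating vertex equal to `+1` (i.e. `l ≠ (−1,…,−1)`),
`#Π*_{L_T,k,l}(w)/k^{t+1} → 0` as `k → ∞`. -/
theorem toepStarSigned_limit_zero (t : ℕ) (w : Fin (2 * t) → ℕ)
    (hw : PairMatched w) (l : Fin (2 * t) → ℤ)
    (hl : ∀ i, l i = 1 ∨ l i = -1) (hl' : ∃ i, IsGen w i ∧ l i = 1) :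
    Tendsto (fun k : ℕ => ((toepStarSigned t k w l).ncard : ℝ) / (k : ℝ) ^ (t + 1))
      atTop (nhds 0) :=
  toepStarSigned_limit_zero_general t w hw l hl'
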